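/- Consider a jointly convex GNEP with N players, a nonempty set 𝒳 ⊆ ℝ^n, choice sets Xᵢ (projections of 𝒳), and preference maps Pᵢ : X → subsets of Xᵢ with open upper sections (each Pᵢ(x) is open). Define Kᵢ(x) = {zᵢ ∈ Xᵢ : (x₋ᵢ, zᵢ) ∈ 𝒳}, Tᵢ(x) = conv(𝒩_{conv∘Pᵢ}(x) ∩ Sᵢ[0,1]), and T(x) = ∏ᵢ Tᵢ(x). Then any solution x̃ of the Stampacchia variational inequality VI(T, 𝒳) (i.e., x̃ ∈ 𝒳 and there exists x̃* ∈ T(x̃) with ⟨x̃*, y − x̃⟩ ≥ 0 for all y ∈ 𝒳) satisfies Pᵢ(x̃) ∩ Kᵢ(x̃) = ∅ for all i, i.e., x̃ is a generalized Nash equilibrium. -/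

import Mathlib

open scoped RealInnerProductSpace Topology

/-!
A unilateral deviation `zᵢ ∈ Kᵢ(x̃)` turns the variational inequality into
`⟪x̃ᵢ*, zᵢ - x̃ᵢ⟫ ≥ 0`. If moreover `zᵢ ∈ Pᵢ(x̃)`, then, `Pᵢ(x̃)` being open, `zᵢ` can be pushed
a little along any unit normal `w` to `conv Pᵢ(x̃)` at `x̃ᵢ` without leaving `Pᵢ(x̃)`, which forces
`⟪w, zᵢ - x̃ᵢ⟫ < 0`. This strict inequality defines an open half-space, which is convex, so it
passes to the convex hull `Tᵢ(x̃) ∋ x̃ᵢ*`: a contradiction.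
-/

section NormalCone

variable {E : Type*} [NormedAddCommGroup E] [InnerProductSpace ℝ E]

def normalCone (S : Set E) (a : E) : Set E :=
  {w | ∀ z ∈ S, ⟪w, z - a⟫ ≤ 0}

lemma convex_setOf_inner_lt_zero (v : E) : Convex ℝ {w : E | ⟪w, v⟫ < 0} :=
  convex_halfSpace_lt ⟨fun _ _ => inner_add_left _ _ _, fun c _ => real_inner_smul_left _ _ c⟩ 0

lemma IsOpen.inner_sub_neg_of_mem_normalCone {U S : Set E} (hU : IsOpen U) (hUS : U ⊆ S)
    {a w z : E} (hw : w ≠ 0) (hwN : w ∈ normalCone S a) (hz : z ∈ U) : ⟪w, z - a⟫ < 0 := by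
  have hnear : ∀ᶠ t : ℝ in 𝓝 0, z + t • w ∈ U := by
    have hcont : Continuous fun t : ℝ => z + t • w := by fun_prop
    exact hcont.tendsto' 0 z (by simp) |>.eventually (hU.mem_nhds hz)
  obtain ⟨t, htU, ht⟩ :=
    ((hnear.filter_mono nhdsWithin_le_nhds).and (self_mem_nhdsWithin (s := Set.Ioi 0))).exists
  have hle : ⟪w, z - a⟫ + t * ‖w‖ ^ 2 ≤ 0 := by
    calc ⟪w, z - a⟫ + t * ‖w‖ ^ 2 = ⟪w, z + t • w - a⟫ := by
          rw [add_sub_right_comm, inner_add_right, real_inner_smul_right,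
            real_inner_self_eq_norm_sq]
      _ ≤ 0 := hwN _ (hUS htU)
  have hpos : 0 < t * ‖w‖ ^ 2 := mul_pos ht (by positivity)
  linarith

lemma IsOpen.inner_sub_neg_of_mem_convexHull {U S : Set E} (hU : IsOpen U) (hUS : U ⊆ S)
    {a w z : E} (hw : w ∈ convexHull ℝ (normalCone S a ∩ Metric.sphere 0 1)) (hz : z ∈ U) :
    ⟪w, z - a⟫ < 0 := by
  refine convexHull_min (fun v hv => ?_) (convex_setOf_inner_lt_zero (z - a)) hw
  exact hU.inner_sub_neg_of_mem_normalCone hUS (ne_zero_of_mem_unit_sphere ⟨v, hv.2⟩) hv.1 hz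

end NormalCone

lemma sum_inner_update_sub {ι : Type*} [Fintype ι] [DecidableEq ι] {E : ι → Type*}
    [∀ i, NormedAddCommGroup (E i)] [∀ i, InnerProductSpace ℝ (E i)]
    (v x : ∀ i, E i) (i : ι) (z : E i) :
    ∑ j, ⟪v j, Function.update x i z j - x j⟫ = ⟪v i, z - x i⟫ := by
  rw [Finset.sum_eq_single i (fun j _ hj => by simp [Function.update_of_ne hj]) (by simp)]
  simp

theorem VI_solution_is_GNE_general (ι : Type*) [Fintype ι] [DecidableEq ι] (n : ι → ℕ)
    (𝒳 : Set (∀ j, EuclideanSpace ℝ (Fin (n j))))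
    (Xs : ∀ i, Set (EuclideanSpace ℝ (Fin (n i))))
    (P : ∀ i, (∀ j, EuclideanSpace ℝ (Fin (n j))) → Set (EuclideanSpace ℝ (Fin (n i))))
    -- open upper sections
    (hopen : ∀ i x, IsOpen (P i x))
    (K : ∀ i, (∀ j, EuclideanSpace ℝ (Fin (n j))) → Set (EuclideanSpace ℝ (Fin (n i))))
    (hK : ∀ i x, K i x = {z ∈ Xs i | Function.update x i z ∈ 𝒳})
    (T : ∀ i, (∀ j, EuclideanSpace ℝ (Fin (n j))) → Set (EuclideanSpace ℝ (Fin (n i))))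
    (hT : ∀ i x, T i x = convexHull ℝ
      ({w : EuclideanSpace ℝ (Fin (n i)) |
          ∀ z ∈ convexHull ℝ (P i x), ⟪w, z - x i⟫ ≤ 0} ∩
        Metric.sphere (0 : EuclideanSpace ℝ (Fin (n i))) 1))
    -- `xt` solves `VI(T, 𝒳)`
    (xt : ∀ j, EuclideanSpace ℝ (Fin (n j)))
    (xts : ∀ j, EuclideanSpace ℝ (Fin (n j))) (hxts : ∀ i, xts i ∈ T i xt)
    (hVI : ∀ y ∈ 𝒳, 0 ≤ ∑ i, ⟪xts i, y i - xt i⟫) :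
    ∀ i, P i xt ∩ K i xt = ∅ := by
  intro i
  refine Set.eq_empty_iff_forall_notMem.mpr fun z ⟨hzP, hzK⟩ => ?_
  rw [hK] at hzK
  have hdev : 0 ≤ ⟪xts i, z - xt i⟫ := sum_inner_update_sub xts xt i z ▸ hVI _ hzK.2
  have hxts_i : xts i ∈ convexHull ℝ (normalCone (convexHull ℝ (P i xt)) (xt i) ∩
      Metric.sphere 0 1) := hT i xt ▸ hxts i
  have hneg := (hopen i xt).inner_sub_neg_of_mem_convexHull (subset_convexHull ℝ _) hxts_i hzP
  linarith

/-- Any solution of the variational inequality `VI(T, 𝒳)` is an equilibrium of the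
jointly convex GNEP `Γ' = (𝒳, Kᵢ, Pᵢ)` when the preference maps have open upper
sections. -/
theorem VI_solution_is_GNE (ι : Type*) [Fintype ι] [DecidableEq ι] (n : ι → ℕ)
    (𝒳 : Set (∀ j, EuclideanSpace ℝ (Fin (n j)))) (h𝒳 : 𝒳.Nonempty)
    (Xs : ∀ i, Set (EuclideanSpace ℝ (Fin (n i))))
    -- the choice sets are the projections of `𝒳`
    (hproj : ∀ i, Xs i = (fun x => x i) '' 𝒳)
    (P : ∀ i, (∀ j, EuclideanSpace ℝ (Fin (n j))) → Set (EuclideanSpace ℝ (Fin (n i))))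
    (hPsub : ∀ i x, P i x ⊆ Xs i)
    -- open upper sections
    (hopen : ∀ i x, IsOpen (P i x))
    (K : ∀ i, (∀ j, EuclideanSpace ℝ (Fin (n j))) → Set (EuclideanSpace ℝ (Fin (n i))))
    (hK : ∀ i x, K i x = {z ∈ Xs i | Function.update x i z ∈ 𝒳})
    (T : ∀ i, (∀ j, EuclideanSpace ℝ (Fin (n j))) → Set (EuclideanSpace ℝ (Fin (n i))))
    (hT : ∀ i x, T i x = convexHull ℝ
      ({w : EuclideanSpace ℝ (Fin (n i)) |
          ∀ z ∈ convexHull ℝ (P i x), ⟪w, z - x i⟫ ≤ 0} ∩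
        Metric.sphere (0 : EuclideanSpace ℝ (Fin (n i))) 1))
    -- `xt` solves `VI(T, 𝒳)`
    (xt : ∀ j, EuclideanSpace ℝ (Fin (n j))) (hxt : xt ∈ 𝒳)
    (xts : ∀ j, EuclideanSpace ℝ (Fin (n j))) (hxts : ∀ i, xts i ∈ T i xt)
    (hVI : ∀ y ∈ 𝒳, 0 ≤ ∑ i, ⟪xts i, y i - xt i⟫) :
    ∀ i, P i xt ∩ K i xt = ∅ :=
  VI_solution_is_GNE_general ι n 𝒳 Xs P hopen K hK T hT xt xts hxts hVI
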